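/- Semantic characterization of probabilistic Locality: a probabilistic team P over (m̄, ō, λ) satisfies Outcome Independence and Parameter Independence if and only if for all (ā, c) in the support of (m̄, λ) and all outcome values b₁,...,bₙ occurring in the respective components: P(ō = b̄ | m̄ = ā, λ = c) = ∏ᵢ P(oᵢ = bᵢ | mᵢ = aᵢ, λ = c). -/

import Mathlib

open Classical in
/-- Probability of the event `E` under the weight function `P`. -/
noncomputable def pr {σ : Type*} [Fintype σ] (P : σ → ℝ) (E : σ → Prop) : ℝ :=
  ∑ s, if E s then P s else 0

/-- Conditional probability P(E | C). -/
noncomputable def condPr {σ : Type*} [Fintype σ] (P : σ → ℝ) (E C : σ → Prop) : ℝ :=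
  pr P (fun s => E s ∧ C s) / pr P C

/-- Probabilistic conditional independence x̄ ⊥_z̄ ȳ: for all values taken in the
support, P(x̄=a, ȳ=b | z̄=c) = P(x̄=a | z̄=c) · P(ȳ=b | z̄=c). -/
def pIndep {σ α β γ : Type*} [Fintype σ] (P : σ → ℝ) (f : σ → α) (g : σ → β) (h : σ → γ) :
    Prop :=
  ∀ a b c, (∃ s, 0 < P s ∧ f s = a) → (∃ s, 0 < P s ∧ g s = b) → (∃ s, 0 < P s ∧ h s = c) →
    condPr P (fun s => f s = a ∧ g s = b) (fun s => h s = c) =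
      condPr P (fun s => f s = a) (fun s => h s = c) *
        condPr P (fun s => g s = b) (fun s => h s = c)

/-- Probabilistic dependence atom dep(x̄,ȳ): for every value of x̄ in the support
there is a value of ȳ with conditional probability 1. -/
def pDep {σ α β : Type*} [Fintype σ] (P : σ → ℝ) (f : σ → α) (g : σ → β) : Prop :=
  ∀ a, (∃ s, 0 < P s ∧ f s = a) → ∃ b, condPr P (fun s => g s = b) (fun s => f s = a) = 1

/-!
Condition on `m̄ = a, λ = c`. Outcome Independence says that under the conditioned law each `oᵢ`
is independent of the remaining outcomes; by induction on a set of coordinates this makes the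
conditional joint law of `ō` the product of its marginals. Parameter Independence (`oᵢ`
independent of `m̄₋ᵢ` given `mᵢ, λ`) says exactly that these marginals
`P(oᵢ = · | m̄ = a, λ = c)` coincide with `P(oᵢ = · | mᵢ = aᵢ, λ = c)`. Conversely, when the
conditional joint law is a product of probability distributions `qᵢ`, summing out all coordinates
but one shows that its marginals are the `qᵢ` and that each coordinate is independent of the
others.
-/

section Weights

variable {σ : Type*} [Fintype σ] {P Q : σ → ℝ}

theorem pr_congr {E E' : σ → Prop} (h : ∀ s, E s ↔ E' s) : pr P E = pr P E' :=
  congrArg (pr P) (funext fun s => propext (h s))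

theorem pr_nonneg (hP : ∀ s, 0 ≤ P s) (E : σ → Prop) : 0 ≤ pr P E :=
  Finset.sum_nonneg fun s _ => by split_ifs <;> simp [hP s]

theorem pr_mono (hP : ∀ s, 0 ≤ P s) {E F : σ → Prop} (h : ∀ s, E s → F s) :
    pr P E ≤ pr P F :=
  Finset.sum_le_sum fun s _ => by
    by_cases hE : E s
    · simp [hE, h s hE]
    · split_ifs <;> simp [hP s]

theorem pr_pos_iff (hP : ∀ s, 0 ≤ P s) {E : σ → Prop} : 0 < pr P E ↔ ∃ s, 0 < P s ∧ E s := by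
  unfold pr
  rw [Finset.sum_pos_iff_of_nonneg fun s _ => by split_ifs <;> simp [hP s]]
  exact exists_congr fun s => by by_cases hE : E s <;> simp [hE]

theorem condPr_eq_zero_of_forall_not (hP : ∀ s, 0 ≤ P s) {E : σ → Prop} (C : σ → Prop)
    (h : ∀ s, 0 < P s → ¬E s) : condPr P E C = 0 := by
  have hEC : pr P (fun s => E s ∧ C s) = 0 :=
    le_antisymm (not_lt.1 fun hpos => by
      obtain ⟨s, hs, hE, -⟩ := (pr_pos_iff hP).1 hpos
      exact h s hs hE) (pr_nonneg hP _)
  rw [condPr, hEC, zero_div]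

theorem pr_eq_sum_pr_and_eq {β : Type*} [Fintype β] (E : σ → Prop) (g : σ → β) :
    pr Q E = ∑ y, pr Q (fun s => E s ∧ g s = y) := by
  classical
  unfold pr
  rw [Finset.sum_comm]
  refine Finset.sum_congr rfl fun s _ => ?_
  by_cases hE : E s <;> simp [hE]

theorem sum_pr_eq {β : Type*} [Fintype β] (g : σ → β) :
    ∑ y, pr Q (fun s => g s = y) = ∑ s, Q s := by
  rw [← show pr Q (fun _ => True) = ∑ s, Q s by simp [pr], pr_eq_sum_pr_and_eq _ g]
  simp only [true_and]

-- `P` conditioned on `C`; it is the zero weight when `pr P C = 0`.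
open Classical in
noncomputable def condWeight (P : σ → ℝ) (C : σ → Prop) (s : σ) : ℝ :=
  if C s then P s / pr P C else 0

theorem pr_condWeight (C E : σ → Prop) : pr (condWeight P C) E = condPr P E C := by
  classical
  unfold condWeight condPr
  unfold pr
  rw [Finset.sum_div]
  refine Finset.sum_congr rfl fun s _ => ?_
  by_cases hE : E s <;> by_cases hC : C s <;> simp [hE, hC]

theorem sum_condWeight {C : σ → Prop} (hC : pr P C ≠ 0) : ∑ s, condWeight P C s = 1 := by
  have h := pr_condWeight (P := P) C (fun _ => True)
  simp only [condPr, true_and, div_self hC] at h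
  simpa [pr] using h

end Weights

section Independence

variable {σ α β γ : Type*} [Fintype σ] {P Q : σ → ℝ}

def PrIndep (Q : σ → ℝ) (f : σ → α) (g : σ → β) : Prop :=
  ∀ x y, pr Q (fun s => f s = x ∧ g s = y) = pr Q (fun s => f s = x) * pr Q (fun s => g s = y)

theorem pr_and_comp_eq_sum [Fintype β] (E : σ → Prop) (g : σ → β) (B : β → Prop)
    [DecidablePred B] :
    pr Q (fun s => E s ∧ B (g s)) = ∑ y, if B y then pr Q (fun s => E s ∧ g s = y) else 0 := by
  rw [pr_eq_sum_pr_and_eq _ g]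
  refine Finset.sum_congr rfl fun y _ => ?_
  split_ifs with hy
  · exact pr_congr fun s => ⟨fun h => ⟨h.1.1, h.2⟩, fun h => ⟨⟨h.1, h.2 ▸ hy⟩, h.2⟩⟩
  · exact Finset.sum_eq_zero fun s _ =>
      if_neg fun (h : (E s ∧ B (g s)) ∧ g s = y) => hy (h.2 ▸ h.1.2)

theorem PrIndep.pr_and_comp [Fintype β] {f : σ → α} {g : σ → β} (h : PrIndep Q f g) (x : α)
    (B : β → Prop) :
    pr Q (fun s => f s = x ∧ B (g s)) = pr Q (fun s => f s = x) * pr Q (fun s => B (g s)) := by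
  classical
  have hB := pr_and_comp_eq_sum (Q := Q) (fun _ => True) g B
  simp only [true_and] at hB
  rw [pr_and_comp_eq_sum, hB, Finset.mul_sum]
  simp only [h x, mul_ite, mul_zero]

theorem pIndep_iff_prIndep_condWeight (hP : ∀ s, 0 ≤ P s) (f : σ → α) (g : σ → β) (h : σ → γ) :
    pIndep P f g h ↔
      ∀ c, 0 < pr P (fun s => h s = c) → PrIndep (condWeight P (fun s => h s = c)) f g := by
  simp only [PrIndep, pr_condWeight]
  refine ⟨fun H c hc x y => ?_, fun H x y c _ _ hc => H c ((pr_pos_iff hP).2 hc) x y⟩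
  by_cases hx : ∃ s, 0 < P s ∧ f s = x
  · by_cases hy : ∃ s, 0 < P s ∧ g s = y
    · exact H x y c hx hy ((pr_pos_iff hP).1 hc)
    · push Not at hy
      rw [condPr_eq_zero_of_forall_not hP _ fun s hs hxy => hy s hs hxy.2,
        condPr_eq_zero_of_forall_not hP _ hy, mul_zero]
  · push Not at hx
    rw [condPr_eq_zero_of_forall_not hP _ fun s hs hxy => hx s hs hxy.1,
      condPr_eq_zero_of_forall_not hP _ hx, zero_mul]

theorem prIndep_condWeight_iff (hP : ∀ s, 0 ≤ P s) {D : σ → Prop} (hD : 0 < pr P D)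
    (f : σ → α) (g : σ → β) :
    PrIndep (condWeight P D) f g ↔
      ∀ y, 0 < pr P (fun s => g s = y ∧ D s) →
        ∀ x, condPr P (fun s => f s = x) (fun s => g s = y ∧ D s) =
          condPr P (fun s => f s = x) D := by
  simp only [PrIndep, pr_condWeight, condPr, and_assoc]
  refine ⟨fun H y hy x => ?_, fun H x y => ?_⟩
  · have := H x y
    field_simp at this ⊢
    linarith
  · rcases (pr_nonneg hP (fun s => g s = y ∧ D s)).eq_or_lt with hy | hy
    · have hxy : pr P (fun s => f s = x ∧ g s = y ∧ D s) = 0 :=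
        le_antisymm (hy ▸ pr_mono hP fun s hs => hs.2) (pr_nonneg hP _)
      rw [← hy, hxy]
      simp
    · have := H y hy x
      field_simp at this ⊢
      linarith

end Independence

section ProductLaw

theorem eval_eq_and_restrict_eq_iff {ι α : Type*} [DecidableEq ι] {f : ι → α} {i : ι} {x : α}
    {t : {j // j ≠ i} → α} :
    (f i = x ∧ (fun j : {j // j ≠ i} => f j) = t) ↔ f = (Equiv.funSplitAt i α).symm (x, t) := by
  rw [Equiv.eq_symm_apply, Prod.ext_iff]
  rfl

variable {σ ι α : Type*} [Fintype σ] [Fintype ι] [DecidableEq ι] {Q : σ → ℝ} {X : σ → ι → α}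
  {q : ι → α → ℝ}

theorem pr_eval_eq_and_restrict_eq (hX : ∀ b, pr Q (fun s => X s = b) = ∏ i, q i (b i)) (i : ι)
    (x : α) (t : {j // j ≠ i} → α) :
    pr Q (fun s => X s i = x ∧ (fun j : {j // j ≠ i} => X s j) = t) =
      q i x * ∏ j : {j // j ≠ i}, q j (t j) := by
  rw [pr_congr fun s => eval_eq_and_restrict_eq_iff, hX,
    Fintype.prod_eq_mul_prod_subtype_ne _ i]
  congr 1
  · simp
  · exact Finset.prod_congr rfl fun j _ => by simp [j.2]

variable [Fintype α]

theorem pr_restrict_eq_of_pr_eq_prod (hX : ∀ b, pr Q (fun s => X s = b) = ∏ i, q i (b i))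
    (hq : ∀ i, ∑ x, q i x = 1) (i : ι) (t : {j // j ≠ i} → α) :
    pr Q (fun s => (fun j : {j // j ≠ i} => X s j) = t) = ∏ j : {j // j ≠ i}, q j (t j) := by
  rw [pr_eq_sum_pr_and_eq _ fun s => X s i]
  simp only [and_comm (a := _ = t), pr_eval_eq_and_restrict_eq hX, ← Finset.sum_mul, hq, one_mul]

theorem pr_eval_eq_of_pr_eq_prod (hX : ∀ b, pr Q (fun s => X s = b) = ∏ i, q i (b i))
    (hq : ∀ i, ∑ x, q i x = 1) (i : ι) (x : α) : pr Q (fun s => X s i = x) = q i x := by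
  rw [pr_eq_sum_pr_and_eq _ fun s (j : {j // j ≠ i}) => X s j]
  simp only [pr_eval_eq_and_restrict_eq hX, ← Finset.mul_sum, ← Fintype.prod_sum, hq,
    Finset.prod_const_one, mul_one]

theorem prIndep_of_pr_eq_prod (hX : ∀ b, pr Q (fun s => X s = b) = ∏ i, q i (b i))
    (hq : ∀ i, ∑ x, q i x = 1) (i : ι) :
    PrIndep Q (fun s => X s i) (fun s (j : {j // j ≠ i}) => X s j) := fun x t => by
  rw [pr_eval_eq_and_restrict_eq hX, pr_eval_eq_of_pr_eq_prod hX hq,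
    pr_restrict_eq_of_pr_eq_prod hX hq]

theorem pr_forall_mem_eq_prod (hQ : ∑ s, Q s = 1)
    (hX : ∀ i, PrIndep Q (fun s => X s i) (fun s (j : {j // j ≠ i}) => X s j)) (b : ι → α)
    (S : Finset ι) :
    pr Q (fun s => ∀ i ∈ S, X s i = b i) = ∏ i ∈ S, pr Q (fun s => X s i = b i) := by
  induction S using Finset.induction_on with
  | empty => simpa [pr] using hQ
  | insert i S hi ih =>
    rw [Finset.prod_insert hi, ← ih]
    convert (hX i).pr_and_comp (b i)
      (fun t : {j // j ≠ i} → α => ∀ j : {j // j ≠ i}, j.1 ∈ S → t j = b j) using 2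
    · ext s
      simp only [Finset.forall_mem_insert, Subtype.forall]
      exact and_congr_right fun _ =>
        ⟨fun h j _ hj => h j hj, fun h j hj => h j (ne_of_mem_of_not_mem hj hi) hj⟩
    · congr 1
      ext s
      exact ⟨fun h j hj => h j hj, fun h j hj => h ⟨j, ne_of_mem_of_not_mem hj hi⟩ hj⟩

theorem forall_prIndep_and_pr_eval_iff (hQ : ∑ s, Q s = 1)
    (hq : ∀ i, ∑ x, q i x = 1) :
    ((∀ i, PrIndep Q (fun s => X s i) (fun s (j : {j // j ≠ i}) => X s j)) ∧
        ∀ i x, pr Q (fun s => X s i = x) = q i x) ↔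
      ∀ b, pr Q (fun s => X s = b) = ∏ i, q i (b i) := by
  refine ⟨fun ⟨hindep, hmarg⟩ b => ?_, fun hX =>
    ⟨prIndep_of_pr_eq_prod hX hq, pr_eval_eq_of_pr_eq_prod hX hq⟩⟩
  rw [← Finset.prod_congr rfl fun i _ => hmarg i (b i), ← pr_forall_mem_eq_prod hQ hindep]
  exact pr_congr fun s => by simp [funext_iff]

end ProductLaw

section Locality

variable {n : ℕ} {M O L : Type*} [Fintype M] [Fintype O] [Fintype L]
  {P : (Fin n → M) × (Fin n → O) × L → ℝ}

theorem forall_pIndep_outcome_iff_prIndep (hP : ∀ s, 0 ≤ P s) :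
    (∀ i : Fin n,
        pIndep P (fun s => s.2.1 i) (fun s => fun j : {j : Fin n // j ≠ i} => s.2.1 j.1)
          (fun s => (s.1, s.2.2))) ↔
      ∀ a c, 0 < pr P (fun s => s.1 = a ∧ s.2.2 = c) → ∀ i : Fin n,
        PrIndep (condWeight P (fun s => s.1 = a ∧ s.2.2 = c)) (fun s => s.2.1 i)
          (fun s (j : {j // j ≠ i}) => s.2.1 j) := by
  simp only [pIndep_iff_prIndep_condWeight hP, Prod.forall, Prod.mk.injEq]
  exact ⟨fun h a c hC i => h i a c hC, fun h i a c hC => h a c hC i⟩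

theorem pIndep_parameter_iff_condPr_eq (hP : ∀ s, 0 ≤ P s) (i : Fin n) :
    pIndep P (fun s => s.2.1 i) (fun s => fun j : {j : Fin n // j ≠ i} => s.1 j.1)
        (fun s => (s.1 i, s.2.2)) ↔
      ∀ a c, 0 < pr P (fun s => s.1 = a ∧ s.2.2 = c) → ∀ x,
        condPr P (fun s => s.2.1 i = x) (fun s => s.1 = a ∧ s.2.2 = c) =
          condPr P (fun s => s.2.1 i = x) (fun s => s.1 i = a i ∧ s.2.2 = c) := by
  simp only [pIndep_iff_prIndep_condWeight hP, Prod.forall, Prod.mk.injEq]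
  have hcond : ∀ (a' : M) (c : L) (t : {j // j ≠ i} → M) (s : (Fin n → M) × (Fin n → O) × L),
      (((fun j : {j // j ≠ i} => s.1 j) = t ∧ s.1 i = a' ∧ s.2.2 = c) ↔
      s.1 = (Equiv.funSplitAt i M).symm (a', t) ∧ s.2.2 = c) := fun a' c t s => by
    rw [← eval_eq_and_restrict_eq_iff]
    tauto
  constructor
  · intro h a c hpos x
    have hD : 0 < pr P (fun s => s.1 i = a i ∧ s.2.2 = c) :=
      hpos.trans_le (pr_mono hP fun s hs => ⟨hs.1 ▸ rfl, hs.2⟩)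
    have ha : (Equiv.funSplitAt i M).symm (a i, fun j => a j) = a :=
      (Equiv.funSplitAt i M).symm_apply_apply a
    have h' := (prIndep_condWeight_iff hP hD _ _).1 (h (a i) c hD) (fun j => a j)
    simp only [hcond, ha] at h'
    exact h' hpos x
  · intro h a' c hD
    rw [prIndep_condWeight_iff hP hD]
    intro t ht x
    simp only [hcond] at ht ⊢
    simpa only [Equiv.funSplitAt_symm_apply, dite_true] using h _ c ht x

theorem forall_condPr_eq_prod_iff (hP : ∀ s, 0 ≤ P s) :
    (∀ (a : Fin n → M) (c : L) (b : Fin n → O),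
        (∃ s, 0 < P s ∧ s.1 = a ∧ s.2.2 = c) →
        (∀ i, ∃ s, 0 < P s ∧ s.2.1 i = b i) →
        condPr P (fun s => s.2.1 = b) (fun s => s.1 = a ∧ s.2.2 = c) =
          ∏ i : Fin n,
            condPr P (fun s => s.2.1 i = b i) (fun s => s.1 i = a i ∧ s.2.2 = c)) ↔
      ∀ a c, 0 < pr P (fun s => s.1 = a ∧ s.2.2 = c) → ∀ b,
        condPr P (fun s => s.2.1 = b) (fun s => s.1 = a ∧ s.2.2 = c) =
          ∏ i : Fin n,
            condPr P (fun s => s.2.1 i = b i) (fun s => s.1 i = a i ∧ s.2.2 = c) := by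
  simp only [pr_pos_iff hP]
  refine ⟨fun h a c hC b => ?_, fun h a c b hC _ => h a c hC b⟩
  by_cases hb : ∀ i, ∃ s, 0 < P s ∧ s.2.1 i = b i
  · exact h a c b hC hb
  · push Not at hb
    obtain ⟨i, hi⟩ := hb
    rw [condPr_eq_zero_of_forall_not hP _ fun s hs (hsb : s.2.1 = b) => hi s hs (congrFun hsb i),
      Finset.prod_eq_zero (Finset.mem_univ i) (condPr_eq_zero_of_forall_not hP _ hi)]

theorem forall_prIndep_and_condPr_eq_iff_condPr_eq_prod (hP : ∀ s, 0 ≤ P s) {a : Fin n → M}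
    {c : L} (hC : 0 < pr P (fun s => s.1 = a ∧ s.2.2 = c)) :
    ((∀ i : Fin n, PrIndep (condWeight P (fun s => s.1 = a ∧ s.2.2 = c)) (fun s => s.2.1 i)
          (fun s (j : {j // j ≠ i}) => s.2.1 j)) ∧
        ∀ i x, condPr P (fun s => s.2.1 i = x) (fun s => s.1 = a ∧ s.2.2 = c) =
          condPr P (fun s => s.2.1 i = x) (fun s => s.1 i = a i ∧ s.2.2 = c)) ↔
      ∀ b, condPr P (fun s => s.2.1 = b) (fun s => s.1 = a ∧ s.2.2 = c) =
        ∏ i : Fin n, condPr P (fun s => s.2.1 i = b i) (fun s => s.1 i = a i ∧ s.2.2 = c) := by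
  have hD (i : Fin n) : pr P (fun s => s.1 i = a i ∧ s.2.2 = c) ≠ 0 :=
    (hC.trans_le (pr_mono hP fun s hs => ⟨hs.1 ▸ rfl, hs.2⟩)).ne'
  simp only [← pr_condWeight]
  exact forall_prIndep_and_pr_eval_iff (sum_condWeight hC.ne')
    fun i => (sum_pr_eq _).trans (sum_condWeight (hD i))

end Locality

theorem stmt12_general {n : ℕ} {M O L : Type*} [Fintype M] [Fintype O] [Fintype L]
    (P : (Fin n → M) × (Fin n → O) × L → ℝ)
    (hpos : ∀ s, 0 ≤ P s) :
    ((∀ i : Fin n,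
        pIndep P (fun s => s.2.1 i) (fun s => fun j : {j : Fin n // j ≠ i} => s.2.1 j.1)
          (fun s => (s.1, s.2.2))) ∧
      (∀ i : Fin n,
        pIndep P (fun s => s.2.1 i) (fun s => fun j : {j : Fin n // j ≠ i} => s.1 j.1)
          (fun s => (s.1 i, s.2.2)))) ↔
      (∀ (a : Fin n → M) (c : L) (b : Fin n → O),
        (∃ s, 0 < P s ∧ s.1 = a ∧ s.2.2 = c) →
        (∀ i, ∃ s, 0 < P s ∧ s.2.1 i = b i) →
        condPr P (fun s => s.2.1 = b) (fun s => s.1 = a ∧ s.2.2 = c) =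
          ∏ i : Fin n,
            condPr P (fun s => s.2.1 i = b i) (fun s => s.1 i = a i ∧ s.2.2 = c)) := by
  rw [forall_pIndep_outcome_iff_prIndep hpos, forall_congr' (pIndep_parameter_iff_condPr_eq hpos),
    forall_condPr_eq_prod_iff hpos]
  constructor
  · rintro ⟨hOI, hPI⟩ a c hC
    exact (forall_prIndep_and_condPr_eq_iff_condPr_eq_prod hpos hC).1
      ⟨hOI a c hC, fun i => hPI i a c hC⟩
  · intro h
    have hloc a c hC := (forall_prIndep_and_condPr_eq_iff_condPr_eq_prod hpos hC).2 (h a c hC)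
    exact ⟨fun a c hC => (hloc a c hC).1, fun i a c hC => (hloc a c hC).2 i⟩

/-- Semantic characterization of probabilistic Locality: Outcome Independence and
Parameter Independence hold iff the conditional outcome probabilities factor over
the components. -/
theorem stmt12 {n : ℕ} {M O L : Type*} [Fintype M] [Fintype O] [Fintype L]
    (P : (Fin n → M) × (Fin n → O) × L → ℝ)
    (hpos : ∀ s, 0 ≤ P s) (hsum : ∑ s, P s = 1) :
    ((∀ i : Fin n,
        pIndep P (fun s => s.2.1 i) (fun s => fun j : {j : Fin n // j ≠ i} => s.2.1 j.1)
          (fun s => (s.1, s.2.2))) ∧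
      (∀ i : Fin n,
        pIndep P (fun s => s.2.1 i) (fun s => fun j : {j : Fin n // j ≠ i} => s.1 j.1)
          (fun s => (s.1 i, s.2.2)))) ↔
      (∀ (a : Fin n → M) (c : L) (b : Fin n → O),
        (∃ s, 0 < P s ∧ s.1 = a ∧ s.2.2 = c) →
        (∀ i, ∃ s, 0 < P s ∧ s.2.1 i = b i) →
        condPr P (fun s => s.2.1 = b) (fun s => s.1 = a ∧ s.2.2 = c) =
          ∏ i : Fin n,
            condPr P (fun s => s.2.1 i = b i) (fun s => s.1 i = a i ∧ s.2.2 = c)) :=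
  stmt12_general P hpos
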